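/- For smooth real functions τ¹, τ² of t, the vector fields D(τ) := τ ∂_t + (1/2)τ_t x ∂_x + (1/8)τ_tt x² ∂_φ on ℝ³ (coordinates t, x, φ) satisfy the commutation relation [D(τ¹), D(τ²)] = D(τ¹ τ²_t − τ² τ¹_t), where the bracket is the Lie bracket of vector fields. -/

import Mathlib

/-- The Lie bracket of vector fields on `ℝ³`, viewed as maps `ℝ³ → ℝ³`:
`[V,W](p) = dW_p(V(p)) − dV_p(W(p))`. -/
noncomputable def vfBracket (V W : ℝ × ℝ × ℝ → ℝ × ℝ × ℝ) : ℝ × ℝ × ℝ → ℝ × ℝ × ℝ :=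
  fun p => fderiv ℝ W p (V p) - fderiv ℝ V p (W p)

/-- The vector field `D(τ) = τ∂_t + (1/2)τ_t x ∂_x + (1/8)τ_tt x² ∂_φ` on `ℝ³`
with coordinates `(t,x,φ)`. -/
noncomputable def Dfield (τ : ℝ → ℝ) : ℝ × ℝ × ℝ → ℝ × ℝ × ℝ :=
  fun p => (τ p.1, (1/2) * deriv τ p.1 * p.2.1, (1/8) * deriv (deriv τ) p.1 * p.2.1 ^ 2)

private lemma smooth_deriv {τ : ℝ → ℝ} (h : ContDiff ℝ (⊤:ℕ∞) τ) :
    ContDiff ℝ (⊤:ℕ∞) (deriv τ) :=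
  (contDiff_infty_iff_deriv.mp h).2

private lemma diff_of_smooth {τ : ℝ → ℝ} (h : ContDiff ℝ (⊤:ℕ∞) τ) :
    Differentiable ℝ τ :=
  h.differentiable (by simp)

/-- fderiv of a composition with `fst`. -/
private lemma comp_fst_hasFDerivAt {g : ℝ → ℝ} (hg : Differentiable ℝ g) (p : ℝ × ℝ × ℝ) :
    HasFDerivAt (fun q : ℝ × ℝ × ℝ => g q.1)
      ((deriv g p.1) • (ContinuousLinearMap.fst ℝ ℝ (ℝ × ℝ))) p := by
  have h1 : HasFDerivAt g (ContinuousLinearMap.smulRight (1 : ℝ →L[ℝ] ℝ) (deriv g p.1)) p.1 :=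
    (hg p.1).hasDerivAt.hasFDerivAt
  have h2 : HasFDerivAt (fun q : ℝ × ℝ × ℝ => q.1)
      (ContinuousLinearMap.fst ℝ ℝ (ℝ × ℝ)) p := hasFDerivAt_fst
  have := h1.comp p h2
  refine this.congr_fderiv ?_
  refine ContinuousLinearMap.ext fun v => ?_
  simp [mul_comm]

private lemma x_hasFDerivAt (p : ℝ × ℝ × ℝ) :
    HasFDerivAt (fun q : ℝ × ℝ × ℝ => q.2.1)
      ((ContinuousLinearMap.fst ℝ ℝ ℝ).comp (ContinuousLinearMap.snd ℝ ℝ (ℝ × ℝ))) p :=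
  hasFDerivAt_fst.comp p hasFDerivAt_snd

/-- The key computation: the directional derivative of `Dfield τ`. -/
lemma fderiv_Dfield_apply {τ : ℝ → ℝ} (hτ : ContDiff ℝ (⊤:ℕ∞) τ) (p v : ℝ × ℝ × ℝ) :
    fderiv ℝ (Dfield τ) p v =
      (deriv τ p.1 * v.1,
       (1/2) * deriv (deriv τ) p.1 * p.2.1 * v.1 + (1/2) * deriv τ p.1 * v.2.1,
       (1/8) * deriv (deriv (deriv τ)) p.1 * p.2.1 ^ 2 * v.1
         + (1/4) * deriv (deriv τ) p.1 * p.2.1 * v.2.1) := by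
  have hd0 : Differentiable ℝ τ := diff_of_smooth hτ
  have hd1 : Differentiable ℝ (deriv τ) := diff_of_smooth (smooth_deriv hτ)
  have hd2 : Differentiable ℝ (deriv (deriv τ)) := diff_of_smooth (smooth_deriv (smooth_deriv hτ))
  -- component 1
  have H1 := comp_fst_hasFDerivAt hd0 p
  -- component 2
  have Hg : HasFDerivAt (fun q : ℝ × ℝ × ℝ => (1/2) * deriv τ q.1)
      ((1/2 : ℝ) • ((deriv (deriv τ) p.1) • (ContinuousLinearMap.fst ℝ ℝ (ℝ × ℝ)))) p :=
    (comp_fst_hasFDerivAt hd1 p).const_smul (1/2 : ℝ)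
  have H2 := Hg.mul (x_hasFDerivAt p)
  -- component 3
  have Hg3 : HasFDerivAt (fun q : ℝ × ℝ × ℝ => (1/8) * deriv (deriv τ) q.1)
      ((1/8 : ℝ) • ((deriv (deriv (deriv τ)) p.1) • (ContinuousLinearMap.fst ℝ ℝ (ℝ × ℝ)))) p :=
    (comp_fst_hasFDerivAt hd2 p).const_smul (1/8 : ℝ)
  have Hx2 : HasFDerivAt (fun q : ℝ × ℝ × ℝ => q.2.1 ^ 2)
      ((p.2.1 : ℝ) • ((ContinuousLinearMap.fst ℝ ℝ ℝ).comp (ContinuousLinearMap.snd ℝ ℝ (ℝ × ℝ)))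
        + (p.2.1 : ℝ) • ((ContinuousLinearMap.fst ℝ ℝ ℝ).comp
            (ContinuousLinearMap.snd ℝ ℝ (ℝ × ℝ)))) p := by
    simpa [pow_two, Pi.mul_def] using (x_hasFDerivAt p).mul (x_hasFDerivAt p)
  have H3 := Hg3.mul Hx2
  have H : HasFDerivAt (Dfield τ) _ p := H1.prodMk (H2.prodMk H3)
  rw [H.fderiv]
  simp only [ContinuousLinearMap.prod_apply, ContinuousLinearMap.add_apply,
    ContinuousLinearMap.smul_apply, ContinuousLinearMap.coe_comp', Function.comp_apply,
    ContinuousLinearMap.coe_fst', ContinuousLinearMap.coe_snd', smul_eq_mul]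
  refine Prod.ext ?_ (Prod.ext ?_ ?_) <;> simp <;> ring

/-- `[D(τ¹), D(τ²)] = D(τ¹τ²_t − τ²τ¹_t)`. -/
theorem Dfield_bracket (τ1 τ2 : ℝ → ℝ)
    (h1 : ContDiff ℝ (⊤ : ℕ∞) τ1) (h2 : ContDiff ℝ (⊤ : ℕ∞) τ2) :
    vfBracket (Dfield τ1) (Dfield τ2)
      = Dfield (fun t => τ1 t * deriv τ2 t - τ2 t * deriv τ1 t) := by
  have h1' : ContDiff ℝ (⊤:ℕ∞) τ1 := h1.of_le (by simp)
  have h2' : ContDiff ℝ (⊤:ℕ∞) τ2 := h2.of_le (by simp)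
  have d10 : Differentiable ℝ τ1 := diff_of_smooth h1'
  have d11 : Differentiable ℝ (deriv τ1) := diff_of_smooth (smooth_deriv h1')
  have d12 : Differentiable ℝ (deriv (deriv τ1)) :=
    diff_of_smooth (smooth_deriv (smooth_deriv h1'))
  have d20 : Differentiable ℝ τ2 := diff_of_smooth h2'
  have d21 : Differentiable ℝ (deriv τ2) := diff_of_smooth (smooth_deriv h2')
  have d22 : Differentiable ℝ (deriv (deriv τ2)) :=
    diff_of_smooth (smooth_deriv (smooth_deriv h2'))
  set σ : ℝ → ℝ := fun t => τ1 t * deriv τ2 t - τ2 t * deriv τ1 t with hσ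
  have hσ'f : deriv σ = fun t => τ1 t * deriv (deriv τ2) t - τ2 t * deriv (deriv τ1) t := by
    funext t
    rw [hσ]
    rw [deriv_fun_sub (f := fun y => τ1 y * deriv τ2 y) (g := fun y => τ2 y * deriv τ1 y) ((d10 t).mul (d21 t)) ((d20 t).mul (d11 t)),
      deriv_fun_mul (d10 t) (d21 t), deriv_fun_mul (d20 t) (d11 t)]
    ring
  have hσ'2 : ∀ t, deriv σ t = τ1 t * deriv (deriv τ2) t - τ2 t * deriv (deriv τ1) t :=
    fun t => by simp only [hσ'f]
  have hσ''2 : ∀ t, deriv (deriv σ) t =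
      deriv τ1 t * deriv (deriv τ2) t + τ1 t * deriv (deriv (deriv τ2)) t
        - deriv τ2 t * deriv (deriv τ1) t - τ2 t * deriv (deriv (deriv τ1)) t := by
    intro t
    rw [hσ'f]
    rw [deriv_fun_sub (f := fun y => τ1 y * deriv (deriv τ2) y) (g := fun y => τ2 y * deriv (deriv τ1) y) ((d10 t).mul (d22 t)) ((d20 t).mul (d12 t)),
      deriv_fun_mul (d10 t) (d22 t), deriv_fun_mul (d20 t) (d12 t)]
    ring
  funext p
  show fderiv ℝ (Dfield τ2) p (Dfield τ1 p) - fderiv ℝ (Dfield τ1) p (Dfield τ2 p) = Dfield σ p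
  rw [fderiv_Dfield_apply h2' p (Dfield τ1 p), fderiv_Dfield_apply h1' p (Dfield τ2 p)]
  simp only [Dfield, hσ''2, hσ'2]
  simp only [hσ]
  refine Prod.ext ?_ (Prod.ext ?_ ?_) <;> simp only [Prod.fst_sub, Prod.snd_sub] <;> ring
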